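/- A strongly connected finite digraph D has exactly three complementarity eigenvalues if and only if every induced strongly connected proper subdigraph of D is either an isolated vertex or a directed cycle, and D itself is neither a cycle nor a single vertex. -/

import Mathlib

open Matrix
open scoped Classical

noncomputable section

/-- Adjacency matrix of a digraph given by an arc relation `E`. -/
def adjMat {V : Type*} (E : V → V → Prop) : Matrix V V ℝ :=
  Matrix.of fun i j => if E i j then (1 : ℝ) else 0

/-- Spectral radius of a real square matrix: the largest modulus of a (complex) eigenvalue. -/
def matSpecRad {n : Type*} [Fintype n] (A : Matrix n n ℝ) : ℝ :=
  sSup {r : ℝ | ∃ μ ∈ spectrum ℂ (A.map (fun x => (x : ℂ))), r = ‖μ‖}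

/-- Spectral radius of a digraph. -/
def rho {V : Type*} [Fintype V] (E : V → V → Prop) : ℝ :=
  matSpecRad (adjMat E)

/-- The complementarity spectrum of a real square matrix. -/
def compSpec {n : Type*} [Fintype n] (A : Matrix n n ℝ) : Set ℝ :=
  {lam | ∃ x : n → ℝ, x ≠ 0 ∧ 0 ≤ x ∧ 0 ≤ A.mulVec x - lam • x ∧
    x ⬝ᵥ (A.mulVec x - lam • x) = 0}

/-- Reachability by directed paths. -/
def Reach {V : Type*} (E : V → V → Prop) : V → V → Prop :=
  Relation.ReflTransGen E

/-- A digraph is strongly connected if every vertex reaches every other one. -/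
def StronglyConnected {V : Type*} (E : V → V → Prop) : Prop :=
  ∀ u v, Reach E u v

/-- Induced subdigraph on a vertex subset `S`. -/
def induceRel {V : Type*} (E : V → V → Prop) (S : Set V) : S → S → Prop :=
  fun a b => E a.1 b.1

/-- Spectral radius of the induced subdigraph on `S`. -/
def specRadOn {V : Type*} [Fintype V] (E : V → V → Prop) (S : Set V) : ℝ :=
  @rho S (Set.Finite.fintype S.toFinite) (induceRel E S)

/-- Complementarity spectrum of the induced subdigraph on `S`. -/
def compSpecOn {V : Type*} [Fintype V] (E : V → V → Prop) (S : Set V) : Set ℝ :=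
  @compSpec S (Set.Finite.fintype S.toFinite) (adjMat (induceRel E S))

/-- Isomorphism of digraphs. -/
def IsoDigraph {V W : Type*} (E : V → V → Prop) (F : W → W → Prop) : Prop :=
  ∃ e : V ≃ W, ∀ a b, E a b ↔ F (e a) (e b)

/-- The directed cycle on `n` vertices. -/
def cycleRel (n : ℕ) : ZMod n → ZMod n → Prop := fun i j => j = i + 1

/-- A digraph is a directed cycle if it is isomorphic to some `C⃗_n`, `n ≥ 2`. -/
def IsCycleDigraph {V : Type*} (E : V → V → Prop) : Prop :=
  ∃ n : ℕ, 2 ≤ n ∧ IsoDigraph E (cycleRel n)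

/-- A digraph is acyclic if it has no directed cycle. -/
def Acyclic {V : Type*} (E : V → V → Prop) : Prop :=
  ∀ v, ¬ Relation.TransGen E v v

/-- Strongly connected component of the vertex `v`. -/
def component {V : Type*} (E : V → V → Prop) (v : V) : Set V :=
  {u | Reach E u v ∧ Reach E v u}

/-- `D` has an `∞(r,s)`-subdigraph: two directed cycles of lengths `r` and `s`
sharing exactly one vertex, all of whose arcs are arcs of `D`. -/
def InftySub {V : Type*} (E : V → V → Prop) (r s : ℕ) : Prop :=
  ∃ (f : ZMod r → V) (g : ZMod s → V),
    Function.Injective f ∧ Function.Injective g ∧ f 0 = g 0 ∧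
    Set.range f ∩ Set.range g = {f 0} ∧
    (∀ i, E (f i) (f (i + 1))) ∧ (∀ j, E (g j) (g (j + 1)))

/-- `D` has a `θ(a,b,c)`-subdigraph: three internally disjoint directed paths,
two from `v` to `w` (of lengths `a+1` and `b+1`) and one from `w` to `v`
(of length `c+1`), all of whose arcs are arcs of `D`. -/
def ThetaSub {V : Type*} (E : V → V → Prop) (a b c : ℕ) : Prop :=
  ∃ (P : Fin (a + 2) → V) (Q : Fin (b + 2) → V) (R : Fin (c + 2) → V),
    Function.Injective P ∧ Function.Injective Q ∧ Function.Injective R ∧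
    P 0 = Q 0 ∧ Q 0 = R (Fin.last (c + 1)) ∧
    P (Fin.last (a + 1)) = Q (Fin.last (b + 1)) ∧ Q (Fin.last (b + 1)) = R 0 ∧
    (∀ i j, P i = Q j → (i = 0 ∧ j = 0) ∨ (i = Fin.last (a + 1) ∧ j = Fin.last (b + 1))) ∧
    (∀ i j, P i = R j → (i = 0 ∧ j = Fin.last (c + 1)) ∨ (i = Fin.last (a + 1) ∧ j = 0)) ∧
    (∀ i j, Q i = R j → (i = 0 ∧ j = Fin.last (c + 1)) ∨ (i = Fin.last (b + 1) ∧ j = 0)) ∧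
    (∀ i : Fin (a + 1), E (P i.castSucc) (P i.succ)) ∧
    (∀ i : Fin (b + 1), E (Q i.castSucc) (Q i.succ)) ∧
    (∀ i : Fin (c + 1), E (R i.castSucc) (R i.succ))

/-- `D` is (isomorphic to) the `∞(r,s)` digraph: the coalescence of the directed
cycles `C⃗_r` and `C⃗_s` at one vertex, with no further vertices or arcs. -/
def IsInftyDigraph {V : Type*} (E : V → V → Prop) (r s : ℕ) : Prop :=
  ∃ (f : ZMod r → V) (g : ZMod s → V),
    Function.Injective f ∧ Function.Injective g ∧ f 0 = g 0 ∧
    Set.range f ∩ Set.range g = {f 0} ∧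
    Set.range f ∪ Set.range g = Set.univ ∧
    ∀ u v, E u v ↔ ((∃ i, u = f i ∧ v = f (i + 1)) ∨ (∃ j, u = g j ∧ v = g (j + 1)))

/-- `D` is (isomorphic to) the `θ(a,b,c)` digraph: three internally disjoint
directed paths, two from `v` to `w` and one from `w` to `v`, with no further
vertices or arcs. -/
def IsThetaDigraph {V : Type*} (E : V → V → Prop) (a b c : ℕ) : Prop :=
  ∃ (P : Fin (a + 2) → V) (Q : Fin (b + 2) → V) (R : Fin (c + 2) → V),
    Function.Injective P ∧ Function.Injective Q ∧ Function.Injective R ∧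
    P 0 = Q 0 ∧ Q 0 = R (Fin.last (c + 1)) ∧
    P (Fin.last (a + 1)) = Q (Fin.last (b + 1)) ∧ Q (Fin.last (b + 1)) = R 0 ∧
    (∀ i j, P i = Q j → (i = 0 ∧ j = 0) ∨ (i = Fin.last (a + 1) ∧ j = Fin.last (b + 1))) ∧
    (∀ i j, P i = R j → (i = 0 ∧ j = Fin.last (c + 1)) ∨ (i = Fin.last (a + 1) ∧ j = 0)) ∧
    (∀ i j, Q i = R j → (i = 0 ∧ j = Fin.last (c + 1)) ∨ (i = Fin.last (b + 1) ∧ j = 0)) ∧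
    Set.range P ∪ Set.range Q ∪ Set.range R = Set.univ ∧
    (∀ u v, E u v ↔
      ((∃ i : Fin (a + 1), u = P i.castSucc ∧ v = P i.succ) ∨
       (∃ i : Fin (b + 1), u = Q i.castSucc ∧ v = Q i.succ) ∨
       (∃ i : Fin (c + 1), u = R i.castSucc ∧ v = R i.succ)))

/-!
A complementarity eigenvalue `λ` comes with `x ≥ 0` satisfying `A x = λ x` on its support `S`;
restricting `x` to a terminal strong component of `S` shows that `Π(D)` is the set of Perron roots
`ρ(C)` of the strongly connected induced subdigraphs `C`. Collatz–Wielandt comparison with a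
positive eigenvector shows that `ρ(C)` is well defined and strictly increases along proper
inclusions of strongly connected sets; a vertex has `ρ = 0`, an induced cycle has `ρ = 1`, and a
shortest closed walk in a strongly connected set with two vertices is an induced cycle. So if `D`
is not a cycle, `Π(D) ⊇ {0, 1, ρ(D)}`, and a proper strongly connected `S` that is neither a
vertex nor a cycle contributes a fourth value `1 < ρ(S) < ρ(D)`.
-/

section Digraph

variable {V : Type*} {E : V → V → Prop}

lemma adjMat_apply (i j : V) : adjMat E i j = if E i j then 1 else 0 := rfl

lemma adjMat_nonneg (i j : V) : 0 ≤ adjMat E i j := by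
  rw [adjMat_apply]; split_ifs <;> norm_num

lemma adjMat_le_one (i j : V) : adjMat E i j ≤ 1 := by
  rw [adjMat_apply]; split_ifs <;> norm_num

def ReachIn (E : V → V → Prop) (S : Set V) : V → V → Prop :=
  Relation.ReflTransGen fun a b => a ∈ S ∧ b ∈ S ∧ E a b

def StronglyConnectedOn (E : V → V → Prop) (S : Set V) : Prop :=
  ∀ u ∈ S, ∀ v ∈ S, ReachIn E S u v

lemma stronglyConnectedOn_iff {S : Set V} :
    StronglyConnectedOn E S ↔ StronglyConnected (induceRel E S) := by
  constructor
  · intro h u v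
    have lift : ∀ {a b}, ReachIn E S a b → ∀ (ha : a ∈ S) (hb : b ∈ S),
        Reach (induceRel E S) ⟨a, ha⟩ ⟨b, hb⟩ := by
      intro a b hab
      induction hab with
      | refl => exact fun _ _ => .refl
      | tail _ hbc ih => exact fun ha _ => (ih ha hbc.1).tail hbc.2.2
    exact lift (h u u.2 v v.2) u.2 v.2
  · intro h a ha b hb
    exact (h ⟨a, ha⟩ ⟨b, hb⟩).lift Subtype.val fun p q hpq => ⟨p.2, q.2, hpq⟩

lemma StronglyConnected.stronglyConnectedOn_univ (h : StronglyConnected E) :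
    StronglyConnectedOn E Set.univ :=
  fun u _ v _ => Relation.ReflTransGen.mono (fun _ _ hab => ⟨trivial, trivial, hab⟩) _ _ (h u v)

lemma ReachIn.mem_of_closed {S C : Set V} (hC : ∀ i ∈ C, ∀ j ∈ S, E i j → j ∈ C) {u v : V}
    (h : ReachIn E S u v) (hu : u ∈ C) : ReachIn E C u v ∧ v ∈ C := by
  induction h with
  | refl => exact ⟨.refl, hu⟩
  | tail _ hbc ih =>
    have hc := hC _ ih.2 _ hbc.2.1 hbc.2.2
    exact ⟨ih.1.tail ⟨ih.2, hc, hbc.2.2⟩, hc⟩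

lemma StronglyConnectedOn.exists_adj {S : Set V} (hS : StronglyConnectedOn E S)
    (hnt : S.Nontrivial) {i : V} (hi : i ∈ S) : ∃ j ∈ S, E i j := by
  obtain ⟨v, hv, hvi⟩ := hnt.exists_ne i
  rcases (hS i hi v hv).cases_head with h | ⟨j, hij, _⟩
  · exact absurd h.symm hvi
  · exact ⟨j, hij.2.1, hij.2.2⟩

/-- A terminal strong component of `S`: the vertices reachable from a vertex of `S` that reaches
the fewest. -/
lemma exists_stronglyConnectedOn_closed {S : Set V} [Finite V] (hS : S.Nonempty) :
    ∃ C ⊆ S, C.Nonempty ∧ StronglyConnectedOn E C ∧ ∀ i ∈ C, ∀ j ∈ S, E i j → j ∈ C := by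
  let R : V → Set V := fun i => {j | j ∈ S ∧ ReachIn E S i j}
  obtain ⟨i₀, hi₀S, hmin⟩ := S.exists_min_image (fun i => (R i).ncard) S.toFinite hS
  have hclosed : ∀ i ∈ R i₀, ∀ j ∈ S, E i j → j ∈ R i₀ :=
    fun i hi j hj hij => ⟨hj, hi.2.tail ⟨hi.1, hj, hij⟩⟩
  have hR : ∀ u ∈ R i₀, R u = R i₀ := fun u hu =>
    Set.eq_of_subset_of_ncard_le (fun j hj => ⟨hj.1, hu.2.trans hj.2⟩) (hmin u hu.1)
      (Set.toFinite _)
  refine ⟨R i₀, fun j hj => hj.1, ⟨i₀, hi₀S, .refl⟩, fun u hu v hv => ?_, hclosed⟩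
  rw [← hR u hu] at hv
  exact (hv.2.mem_of_closed hclosed hu).1

end Digraph

section Eigenvectors

variable {V : Type*} [Fintype V] {E : V → V → Prop}

lemma adjMat_mulVec_mono {x y : V → ℝ} (h : x ≤ y) : adjMat E *ᵥ x ≤ adjMat E *ᵥ y :=
  fun i => Finset.sum_le_sum fun j _ => mul_le_mul_of_nonneg_left (h j) (adjMat_nonneg i j)

lemma adjMat_mulVec_nonneg {x : V → ℝ} (h : 0 ≤ x) : 0 ≤ adjMat E *ᵥ x := by
  simpa using adjMat_mulVec_mono (E := E) h

lemma le_adjMat_mulVec {x : V → ℝ} (hx : 0 ≤ x) {i j : V} (hij : E i j) :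
    x j ≤ (adjMat E *ᵥ x) i := by
  rw [mulVec_apply]
  calc x j = adjMat E i j * x j := by simp [adjMat_apply, hij]
    _ ≤ _ := Finset.single_le_sum (fun k _ => mul_nonneg (adjMat_nonneg i k) (hx k))
        (Finset.mem_univ j)

lemma adjMat_mulVec_le_card_mul {x : V → ℝ} (hx : 0 ≤ x) {i : V} (hi : ∀ j, x j ≤ x i) :
    (adjMat E *ᵥ x) i ≤ Fintype.card V * x i := by
  rw [mulVec_apply, ← nsmul_eq_mul, ← Finset.card_univ, ← Finset.sum_const]
  refine Finset.sum_le_sum fun j _ => ?_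
  calc adjMat E i j * x j ≤ 1 * x i :=
        mul_le_mul (adjMat_le_one i j) (hi j) (hx j) zero_le_one
    _ = x i := one_mul _

def IsSubEigvecOn (E : V → V → Prop) (S : Set V) (r : ℝ) (x : V → ℝ) : Prop :=
  0 ≤ x ∧ (∀ i ∉ S, x i = 0) ∧ ∀ i ∈ S, r * x i ≤ (adjMat E *ᵥ x) i

def IsEigvecOn (E : V → V → Prop) (S : Set V) (r : ℝ) (x : V → ℝ) : Prop :=
  0 ≤ x ∧ (∀ i, 0 < x i ↔ i ∈ S) ∧ ∀ i ∈ S, (adjMat E *ᵥ x) i = r * x i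

/-- For strongly connected `S`, such an `r` is the spectral radius of the induced subdigraph
on `S` (Perron–Frobenius); spectral radii enter the argument only in this form. -/
def HasEigOn (E : V → V → Prop) (S : Set V) (r : ℝ) : Prop :=
  ∃ x, IsEigvecOn E S r x

lemma IsEigvecOn.apply_eq_zero {S : Set V} {r : ℝ} {x : V → ℝ} (hx : IsEigvecOn E S r x)
    {i : V} (hi : i ∉ S) : x i = 0 :=
  le_antisymm (not_lt.1 (mt (hx.2.1 i).1 hi)) (hx.1 i)

lemma IsEigvecOn.isSubEigvecOn {S T : Set V} {r : ℝ} {x : V → ℝ} (hx : IsEigvecOn E S r x)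
    (hST : S ⊆ T) : IsSubEigvecOn E T r x := by
  refine ⟨hx.1, fun i hi => hx.apply_eq_zero fun h => hi (hST h), fun i _ => ?_⟩
  by_cases hiS : i ∈ S
  · exact (hx.2.2 i hiS).ge
  · simpa [hx.apply_eq_zero hiS] using adjMat_mulVec_nonneg hx.1 i

lemma mem_compSpec_iff_exists_hasEigOn {r : ℝ} :
    r ∈ compSpec (adjMat E) ↔ ∃ S : Set V, S.Nonempty ∧ HasEigOn E S r := by
  constructor
  · rintro ⟨x, hx0, hx, hgap, horth⟩
    have hterm : ∀ i, x i * (adjMat E *ᵥ x - r • x) i = 0 := fun i =>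
      (Finset.sum_eq_zero_iff_of_nonneg fun j _ => mul_nonneg (hx j) (hgap j)).1 horth i
        (Finset.mem_univ i)
    obtain ⟨i, hi⟩ := Function.ne_iff.1 hx0
    refine ⟨{i | 0 < x i}, ⟨i, (hx i).lt_of_ne' hi⟩, x, hx, fun _ => Iff.rfl, fun j hj => ?_⟩
    simpa [sub_eq_zero] using (mul_eq_zero.1 (hterm j)).resolve_left hj.ne'
  · rintro ⟨S, ⟨i, hi⟩, x, hx⟩
    have hgap : 0 ≤ adjMat E *ᵥ x - r • x := fun j => by
      by_cases hj : j ∈ S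
      · simp [hx.2.2 j hj]
      · simpa [hx.apply_eq_zero hj] using adjMat_mulVec_nonneg hx.1 j
    refine ⟨x, fun h => ((hx.2.1 i).2 hi).ne' (congrFun h i), hx.1, hgap,
      Finset.sum_eq_zero fun j _ => ?_⟩
    by_cases hj : j ∈ S
    · simp [hx.2.2 j hj]
    · simp [hx.apply_eq_zero hj]

end Eigenvectors

section CollatzWielandt

variable {V : Type*} [Fintype V] {E : V → V → Prop} {S T : Set V} {r μ : ℝ} {x y : V → ℝ}

lemma IsEigvecOn.ne_zero (hx : IsEigvecOn E S r x) (hS : S.Nonempty) : x ≠ 0 := fun h =>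
  ((hx.2.1 _).2 hS.some_mem).ne' (congrFun h _)

lemma exists_le_smul_eq_of_support_subset (hx : 0 ≤ x) (hx0 : x ≠ 0)
    (hxT : ∀ i ∉ T, x i = 0) (hy : 0 ≤ y) (hyT : ∀ i ∈ T, 0 < y i) :
    ∃ t > 0, ∃ i ∈ T, x ≤ t • y ∧ x i = t * y i := by
  obtain ⟨k, hk⟩ := Function.ne_iff.1 hx0
  have hkT : k ∈ T := by_contra fun h => hk (hxT k h)
  obtain ⟨i, hiT, hmax⟩ := T.exists_max_image (fun j => x j / y j) T.toFinite ⟨k, hkT⟩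
  refine ⟨x i / y i, (div_pos ((hx k).lt_of_ne' hk) (hyT k hkT)).trans_le (hmax k hkT), i, hiT,
    fun j => ?_, (div_mul_cancel₀ _ (hyT i hiT).ne').symm⟩
  by_cases hj : j ∈ T
  · exact (div_le_iff₀ (hyT j hj)).1 (hmax j hj)
  · have ht : 0 ≤ x i / y i := div_nonneg (hx i) (hy i)
    simpa [hxT j hj] using mul_nonneg ht (hy j)

lemma IsSubEigvecOn.le_of_isEigvecOn (hx : IsSubEigvecOn E T r x) (hx0 : x ≠ 0)
    (hy : IsEigvecOn E T μ y) : r ≤ μ := by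
  obtain ⟨t, ht, i, hiT, hle, heq⟩ :=
    exists_le_smul_eq_of_support_subset hx.1 hx0 hx.2.1 hy.1 fun i hi => (hy.2.1 i).2 hi
  have hxi : 0 < x i := heq ▸ mul_pos ht ((hy.2.1 i).2 hiT)
  refine le_of_mul_le_mul_right ?_ hxi
  calc r * x i ≤ (adjMat E *ᵥ x) i := hx.2.2 i hiT
    _ ≤ (adjMat E *ᵥ (t • y)) i := adjMat_mulVec_mono hle i
    _ = μ * x i := by rw [mulVec_smul, Pi.smul_apply, hy.2.2 i hiT, heq, smul_eq_mul]; ring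

/-- In the equality case `x = t y` propagates from one vertex along arcs, so `x` cannot vanish
anywhere on a strongly connected `T`. -/
lemma IsSubEigvecOn.lt_of_isEigvecOn (hx : IsSubEigvecOn E T r x) (hx0 : x ≠ 0)
    (hy : IsEigvecOn E T μ y) (hT : StronglyConnectedOn E T) {v : V} (hv : v ∈ T)
    (hxv : x v = 0) : r < μ := by
  refine (hx.le_of_isEigvecOn hx0 hy).lt_of_ne fun hrμ => ?_
  subst hrμ
  obtain ⟨t, ht, i, hiT, hle, heq⟩ :=
    exists_le_smul_eq_of_support_subset hx.1 hx0 hx.2.1 hy.1 fun i hi => (hy.2.1 i).2 hi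
  have hw : 0 ≤ t • y - x := sub_nonneg.2 hle
  have hclosed : ∀ j ∈ {j ∈ T | x j = t * y j}, ∀ k ∈ T, E j k → k ∈ {j ∈ T | x j = t * y j} := by
    rintro j ⟨hjT, hxj⟩ k hkT hjk
    have hAw : (adjMat E *ᵥ (t • y - x)) j ≤ 0 := by
      rw [mulVec_sub, mulVec_smul, Pi.sub_apply, Pi.smul_apply, hy.2.2 j hjT, smul_eq_mul]
      have hrx := hx.2.2 j hjT
      rw [hxj] at hrx
      linarith [mul_left_comm t r (y j)]
    have := (le_adjMat_mulVec hw hjk).trans hAw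
    simp only [Pi.sub_apply, Pi.smul_apply, smul_eq_mul, sub_nonpos] at this
    exact ⟨hkT, le_antisymm (hle k) this⟩
  have hxv' := ((hT i hiT v hv).mem_of_closed hclosed ⟨hiT, heq⟩).2.2
  exact (mul_pos ht ((hy.2.1 v).2 hv)).ne' (hxv' ▸ hxv)

lemma HasEigOn.eq (hT : T.Nonempty) (h₁ : HasEigOn E T r) (h₂ : HasEigOn E T μ) : r = μ := by
  obtain ⟨x, hx⟩ := h₁
  obtain ⟨y, hy⟩ := h₂
  exact le_antisymm ((hx.isSubEigvecOn le_rfl).le_of_isEigvecOn (hx.ne_zero hT) hy)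
    ((hy.isSubEigvecOn le_rfl).le_of_isEigvecOn (hy.ne_zero hT) hx)

lemma HasEigOn.lt_of_ssubset (hS : S.Nonempty) (hST : S ⊂ T) (hT : StronglyConnectedOn E T)
    (h₁ : HasEigOn E S r) (h₂ : HasEigOn E T μ) : r < μ := by
  obtain ⟨x, hx⟩ := h₁
  obtain ⟨y, hy⟩ := h₂
  obtain ⟨v, hvT, hvS⟩ := Set.exists_of_ssubset hST
  exact (hx.isSubEigvecOn hST.subset).lt_of_isEigvecOn (hx.ne_zero hS) hy hT hvT
    (hx.apply_eq_zero hvS)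

lemma IsEigvecOn.indicator_of_closed {C : Set V} (hx : IsEigvecOn E S r x) (hCS : C ⊆ S)
    (hC : ∀ i ∈ C, ∀ j ∈ S, E i j → j ∈ C) : IsEigvecOn E C r (C.indicator x) := by
  refine ⟨Set.indicator_nonneg fun i _ => hx.1 i, fun i => ?_, fun i hi => ?_⟩
  · by_cases hi : i ∈ C
    · simpa [hi] using (hx.2.1 i).2 (hCS hi)
    · simp [hi]
  · have hsame : (adjMat E *ᵥ C.indicator x) i = (adjMat E *ᵥ x) i := by
      simp only [mulVec_apply]
      refine Finset.sum_congr rfl fun j _ => ?_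
      by_cases hjC : j ∈ C
      · rw [Set.indicator_of_mem hjC]
      · rw [Set.indicator_of_notMem hjC]
        by_cases hij : E i j
        · rw [hx.apply_eq_zero fun hjS => hjC (hC i hi j hjS hij)]
        · simp [adjMat_apply, hij]
    rw [hsame, hx.2.2 i (hCS hi), Set.indicator_of_mem hi]

lemma HasEigOn.exists_stronglyConnectedOn (hS : S.Nonempty) (h : HasEigOn E S r) :
    ∃ C, C.Nonempty ∧ StronglyConnectedOn E C ∧ HasEigOn E C r := by
  obtain ⟨x, hx⟩ := h
  obtain ⟨C, hCS, hC, hCsc, hCcl⟩ := exists_stronglyConnectedOn_closed (E := E) hS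
  exact ⟨C, hC, hCsc, _, hx.indicator_of_closed hCS hCcl⟩

lemma mem_compSpec_iff : r ∈ compSpec (adjMat E) ↔
    ∃ C : Set V, C.Nonempty ∧ StronglyConnectedOn E C ∧ HasEigOn E C r := by
  rw [mem_compSpec_iff_exists_hasEigOn]
  constructor
  · rintro ⟨S, hS, h⟩
    exact h.exists_stronglyConnectedOn hS
  · rintro ⟨C, hC, -, h⟩
    exact ⟨C, hC, h⟩

end CollatzWielandt

section Perron

open Filter Topology

variable {V : Type*} [Fintype V] {E : V → V → Prop} {S : Set V} {r : ℝ} {x : V → ℝ}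

lemma IsSubEigvecOn.smul (hx : IsSubEigvecOn E S r x) {c : ℝ} (hc : 0 ≤ c) :
    IsSubEigvecOn E S r (c • x) := by
  refine ⟨smul_nonneg hc hx.1, fun i hi => by simp [hx.2.1 i hi], fun i hi => ?_⟩
  simp only [mulVec_smul, Pi.smul_apply, smul_eq_mul, mul_left_comm r c]
  exact mul_le_mul_of_nonneg_left (hx.2.2 i hi) hc

lemma IsSubEigvecOn.le_card (hx : IsSubEigvecOn E S r x) (hx0 : x ≠ 0) :
    r ≤ Fintype.card V := by
  obtain ⟨k, hk⟩ := Function.ne_iff.1 hx0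
  obtain ⟨i, -, hmax⟩ := Finset.exists_max_image Finset.univ x ⟨k, Finset.mem_univ k⟩
  have hxi : 0 < x i := ((hx.1 k).lt_of_ne' hk).trans_le (hmax k (Finset.mem_univ k))
  have hiS : i ∈ S := by_contra fun h => hxi.ne' (hx.2.1 i h)
  exact le_of_mul_le_mul_right ((hx.2.2 i hiS).trans
    (adjMat_mulVec_le_card_mul hx.1 fun j => hmax j (Finset.mem_univ j))) hxi

lemma IsSubEigvecOn.exists_lt (hx : IsSubEigvecOn E S r x)
    (hlt : ∀ i ∈ S, r * x i < (adjMat E *ᵥ x) i) : ∃ r' > r, IsSubEigvecOn E S r' x := by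
  have hev : ∀ᶠ r' in 𝓝 r, ∀ i ∈ S, r' * x i < (adjMat E *ᵥ x) i := by
    refine eventually_all.2 fun i => ?_
    by_cases hi : i ∈ S
    · exact (((continuous_id.mul continuous_const).tendsto r).eventually
        (gt_mem_nhds (hlt i hi))).mono fun _ h _ => h
    · exact Eventually.of_forall fun _ h => absurd h hi
  obtain ⟨r', hr', hrr'⟩ := ((hev.filter_mono nhdsWithin_le_nhds).and
    (self_mem_nhdsWithin : ∀ᶠ r' in 𝓝[>] r, r' ∈ Set.Ioi r)).exists
  exact ⟨r', hrr', hx.1, hx.2.1, fun i hi => (hr' i hi).le⟩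

/-- One step of `x ↦ (I + A) x`, cut down to `S`. -/
def improveStep (E : V → V → Prop) (S : Set V) (x : V → ℝ) : V → ℝ :=
  x + S.indicator (adjMat E *ᵥ x)

lemma improveStep_gap {i : V} (hi : i ∈ S) :
    (adjMat E *ᵥ improveStep E S x) i - r * improveStep E S x i =
      ((adjMat E *ᵥ x) i - r * x i) + (adjMat E *ᵥ (S.indicator (adjMat E *ᵥ x) - r • x)) i := by
  simp only [improveStep, mulVec_add, mulVec_sub, mulVec_smul, Pi.add_apply, Pi.sub_apply,
    Pi.smul_apply, smul_eq_mul, Set.indicator_of_mem hi]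
  ring

lemma IsSubEigvecOn.indicator_sub_nonneg (hx : IsSubEigvecOn E S r x) :
    0 ≤ S.indicator (adjMat E *ᵥ x) - r • x := fun j => by
  by_cases hj : j ∈ S
  · simpa [Set.indicator_of_mem hj] using hx.2.2 j hj
  · simp [Set.indicator_of_notMem hj, hx.2.1 j hj]

lemma IsSubEigvecOn.le_improveStep (hx : IsSubEigvecOn E S r x) : x ≤ improveStep E S x :=
  le_add_of_nonneg_right (Set.indicator_nonneg (fun i _ => adjMat_mulVec_nonneg hx.1 i))

lemma isSubEigvecOn_improveStep (hx : IsSubEigvecOn E S r x) :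
    IsSubEigvecOn E S r (improveStep E S x) := by
  refine ⟨hx.1.trans hx.le_improveStep, fun i hi => ?_, fun i hi => ?_⟩
  · simp [improveStep, hx.2.1 i hi, Set.indicator_of_notMem hi]
  · have := improveStep_gap (E := E) (x := x) (r := r) hi
    have hA : 0 ≤ (adjMat E *ᵥ (S.indicator (adjMat E *ᵥ x) - r • x)) i :=
      adjMat_mulVec_nonneg hx.indicator_sub_nonneg i
    linarith [hx.2.2 i hi]

lemma IsSubEigvecOn.improveStep_lt (hx : IsSubEigvecOn E S r x) {i j : V} (hi : i ∈ S) (hj : j ∈ S)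
    (hij : j = i ∨ E i j) (hlt : r * x j < (adjMat E *ᵥ x) j) :
    r * improveStep E S x i < (adjMat E *ᵥ improveStep E S x) i := by
  have hgap := improveStep_gap (E := E) (x := x) (r := r) hi
  have hA : 0 ≤ (adjMat E *ᵥ (S.indicator (adjMat E *ᵥ x) - r • x)) i :=
    adjMat_mulVec_nonneg hx.indicator_sub_nonneg i
  rcases hij with rfl | hij
  · linarith
  · have := le_adjMat_mulVec hx.indicator_sub_nonneg hij
    simp only [Pi.sub_apply, Set.indicator_of_mem hj, Pi.smul_apply, smul_eq_mul] at this
    linarith [hx.2.2 i hi]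

/-- If no ratio above `r` is achieved on the strongly connected `S`, every nonzero
subeigenvector for `r` is an eigenvector: otherwise iterating `improveStep` makes the inequality
strict on all of `S`, and then a slightly larger ratio is achieved. -/
lemma IsSubEigvecOn.mulVec_eq_of_maximal (hS : StronglyConnectedOn E S)
    (hx : IsSubEigvecOn E S r x) (hx0 : x ≠ 0)
    (hmax : ∀ r' > r, ∀ y, IsSubEigvecOn E S r' y → y = 0) :
    ∀ i ∈ S, (adjMat E *ᵥ x) i = r * x i := by
  by_contra! ⟨i₁, hi₁, hne⟩
  let z : ℕ → V → ℝ := fun n => (improveStep E S)^[n] x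
  have hstep : ∀ n, z (n + 1) = improveStep E S (z n) := fun n =>
    Function.iterate_succ_apply' _ _ _
  have hz : ∀ n, IsSubEigvecOn E S r (z n) := fun n => by
    induction n with
    | zero => exact hx
    | succ n ih => exact hstep n ▸ isSubEigvecOn_improveStep ih
  have hxz : ∀ n, x ≤ z n := fun n => by
    induction n with
    | zero => exact le_rfl
    | succ n ih => exact hstep n ▸ ih.trans (hz n).le_improveStep
  have hreach : ∀ v, ReachIn E S v i₁ → ∃ n, r * z n v < (adjMat E *ᵥ z n) v := by
    intro v hv
    induction hv using Relation.ReflTransGen.head_induction_on with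
    | refl => exact ⟨0, lt_of_le_of_ne (hx.2.2 i₁ hi₁) hne.symm⟩
    | head hvw _ ih =>
      obtain ⟨n, hn⟩ := ih
      exact ⟨n + 1, hstep n ▸ (hz n).improveStep_lt hvw.1 hvw.2.1 (.inr hvw.2.2) hn⟩
  have hev : ∀ᶠ n in atTop, ∀ v ∈ S, r * z n v < (adjMat E *ᵥ z n) v := by
    refine eventually_all.2 fun v => ?_
    by_cases hv : v ∈ S
    · obtain ⟨n, hn⟩ := hreach v (hS v hv i₁ hi₁)
      refine eventually_atTop.2 ⟨n, fun m hm _ => ?_⟩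
      induction m, hm using Nat.le_induction with
      | base => exact hn
      | succ m _ ih => exact hstep m ▸ (hz m).improveStep_lt hv hv (.inl rfl) ih
    · exact Eventually.of_forall fun _ h => absurd h hv
  obtain ⟨n, hn⟩ := hev.exists
  obtain ⟨r', hr', hy⟩ := (hz n).exists_lt hn
  exact hx0 (le_antisymm ((hxz n).trans (hmax r' hr' _ hy).le) hx.1)

lemma IsSubEigvecOn.isEigvecOn_of_eq (hS : StronglyConnectedOn E S) (hx : IsSubEigvecOn E S r x)
    (hx0 : x ≠ 0) (heq : ∀ i ∈ S, (adjMat E *ᵥ x) i = r * x i) : IsEigvecOn E S r x := by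
  obtain ⟨p, hp⟩ : ∃ p, x p ≠ 0 := Function.ne_iff.1 hx0
  have hpx : 0 < x p := (hx.1 p).lt_of_ne' hp
  have hpS : p ∈ S := by_contra fun h => hp (hx.2.1 p h)
  refine ⟨hx.1, fun i => ⟨fun hi => by_contra fun h => hi.ne' (hx.2.1 i h), fun hi => ?_⟩, heq⟩
  induction hS i hi p hpS using Relation.ReflTransGen.head_induction_on with
  | refl => exact hpx
  | head hij _ ih =>
    have : 0 < r * x _ := (heq _ hij.1) ▸ (ih hij.2.1).trans_le (le_adjMat_mulVec hx.1 hij.2.2)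
    refine (hx.1 _).lt_of_ne' fun h => this.ne' ?_
    rw [h, Pi.zero_apply, mul_zero]

/-- Capping the ratio at `card V`, which bounds every ratio (`IsSubEigvecOn.le_card`), makes this
set compact. -/
def collatzWielandtSet (E : V → V → Prop) (S : Set V) : Set (ℝ × (V → ℝ)) :=
  {p | p.1 ∈ Set.Icc 0 (Fintype.card V : ℝ) ∧ IsSubEigvecOn E S p.1 p.2 ∧ ∑ i, p.2 i = 1}

lemma isCompact_collatzWielandtSet : IsCompact (collatzWielandtSet E S) := by
  have hbox : IsCompact (Set.Icc 0 (Fintype.card V : ℝ) ×ˢ Set.Icc (0 : V → ℝ) 1) :=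
    isCompact_Icc.prod isCompact_Icc
  refine hbox.of_isClosed_subset ?_ ?_
  · simp only [collatzWielandtSet, IsSubEigvecOn, Set.ofPred_and, Set.ofPred_forall, Pi.le_def]
    have hmv : ∀ i, Continuous fun p : ℝ × (V → ℝ) => (adjMat E *ᵥ p.2) i := fun i =>
      (continuous_apply i).comp (continuous_const.matrix_mulVec continuous_snd)
    exact (isClosed_Icc.preimage continuous_fst).inter
      (((isClosed_iInter fun i => isClosed_le continuous_const (by fun_prop)).inter
        ((isClosed_iInter fun i => isClosed_iInter fun _ => isClosed_eq (by fun_prop)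
          continuous_const).inter
        (isClosed_biInter fun i _ => isClosed_le (by fun_prop) (hmv i)))).inter
      (isClosed_eq (by fun_prop) continuous_const))
  · rintro ⟨r, x⟩ ⟨hr, hx, hsum⟩
    exact ⟨hr, hx.1, fun i =>
      (Finset.single_le_sum (f := x) (fun j _ => hx.1 j) (Finset.mem_univ i)).trans_eq hsum⟩

lemma collatzWielandtSet_nonempty (hS : S.Nonempty) : (collatzWielandtSet E S).Nonempty := by
  obtain ⟨s, hs⟩ := hS
  refine ⟨(0, Pi.single s 1),
    ⟨⟨le_rfl, Nat.cast_nonneg _⟩, ⟨?_, fun i hi => ?_, fun i _ => ?_⟩, ?_⟩⟩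
  · simp
  · simp [show i ≠ s by rintro rfl; exact hi hs]
  · simpa using adjMat_mulVec_nonneg (E := E) (Pi.single_nonneg.2 zero_le_one) i
  · simp

theorem StronglyConnectedOn.exists_hasEigOn (hS : StronglyConnectedOn E S) (hne : S.Nonempty) :
    ∃ r, HasEigOn E S r := by
  obtain ⟨⟨r, x⟩, ⟨hr, hx, hsum⟩, hmax⟩ := isCompact_collatzWielandtSet.exists_isMaxOn
    (collatzWielandtSet_nonempty hne) continuous_fst.continuousOn
  have hx0 : x ≠ 0 := by rintro rfl; simp at hsum
  have hmax' : ∀ r' > r, ∀ y, IsSubEigvecOn E S r' y → y = 0 := by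
    intro r' hr' y hy
    by_contra hy0
    obtain ⟨k, hk⟩ := Function.ne_iff.1 hy0
    have hpos : 0 < ∑ i, y i :=
      Finset.sum_pos' (fun i _ => hy.1 i) ⟨k, Finset.mem_univ k, (hy.1 k).lt_of_ne' hk⟩
    have hmem : (r', (∑ i, y i)⁻¹ • y) ∈ collatzWielandtSet E S :=
      ⟨⟨hr.1.trans hr'.le, hy.le_card hy0⟩, hy.smul (inv_nonneg.2 hpos.le),
        by simp [← Finset.mul_sum, inv_mul_cancel₀ hpos.ne']⟩
    exact (hmax hmem).not_gt hr'
  exact ⟨r, x, hx.isEigvecOn_of_eq hS hx0 (hx.mulVec_eq_of_maximal hS hx0 hmax')⟩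

end Perron

section Cycles

variable {V : Type*} {E : V → V → Prop} {S C : Set V}

def IsInducedCycle (E : V → V → Prop) (C : Set V) : Prop :=
  ∃ n : ℕ, 2 ≤ n ∧ ∃ f : ZMod n → V, Function.Injective f ∧ Set.range f = C ∧
    ∀ i j, E (f i) (f j) ↔ j = i + 1

def HasClosedWalk (E : V → V → Prop) (S : Set V) (n : ℕ) : Prop :=
  ∃ f : ZMod n → V, (∀ i, f i ∈ S) ∧ ∀ i, E (f i) (f (i + 1))

lemma hasClosedWalk_of_path {g : ℕ → V} (hgS : ∀ k, g k ∈ S) (hg : ∀ k, E (g k) (g (k + 1)))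
    {ℓ : ℕ} (hℓ : E (g ℓ) (g 0)) : HasClosedWalk E S (ℓ + 1) := by
  refine ⟨fun a => g a.val, fun a => hgS _, fun a => ?_⟩
  have hval : (a + 1).val = (a.val + 1) % (ℓ + 1) := by
    rw [← ZMod.val_natCast, Nat.cast_add, ZMod.natCast_zmod_val, Nat.cast_one]
  show E (g a.val) (g (a + 1).val)
  rcases (Nat.lt_succ_iff.1 (ZMod.val_lt a)).lt_or_eq with h | h
  · rw [hval, Nat.mod_eq_of_lt (by omega)]
    exact hg _
  · rw [hval, h, Nat.mod_self]
    exact hℓ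

/-- Follow out-arcs inside `S` until a vertex repeats. -/
lemma StronglyConnectedOn.exists_hasClosedWalk [Finite V] (hS : StronglyConnectedOn E S)
    (hnt : S.Nontrivial) : ∃ ℓ, HasClosedWalk E S (ℓ + 1) := by
  choose! next hnextS hnext using fun i (hi : i ∈ S) => hS.exists_adj hnt hi
  obtain ⟨s, hs⟩ := hnt.nonempty
  let g : ℕ → V := fun k => next^[k] s
  have hgS : ∀ k, g k ∈ S := fun k => Set.MapsTo.iterate hnextS k hs
  have hg : ∀ k, E (g k) (g (k + 1)) := fun k => by
    simpa only [g, Function.iterate_succ_apply'] using hnext _ (hgS k)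
  obtain ⟨i, j, hij, heq⟩ := Finite.exists_ne_map_eq_of_infinite g
  wlog hlt : i < j generalizing i j
  · exact this j i hij.symm heq.symm (by omega)
  refine ⟨j - i - 1, hasClosedWalk_of_path (g := fun k => g (i + k)) (fun k => hgS _)
    (fun k => hg _) ?_⟩
  simpa [show i + (j - i - 1) + 1 = j by omega, ← heq] using hg (i + (j - i - 1))

/-- A shortest closed walk is an induced cycle: a repeated vertex or a chord would close up a
shorter walk. -/
lemma exists_isInducedCycle_of_hasClosedWalk (hloop : ∀ v, ¬ E v v)
    (h : ∃ ℓ, HasClosedWalk E S (ℓ + 1)) : ∃ C ⊆ S, IsInducedCycle E C := by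
  obtain ⟨f, hfS, hf⟩ := Nat.find_spec h
  have hshort : ∀ (c : ZMod (Nat.find h + 1)) (ℓ : ℕ), E (f (c + ℓ)) (f c) → Nat.find h ≤ ℓ :=
    fun c ℓ hE => Nat.find_min' h (hasClosedWalk_of_path (g := fun k => f (c + k))
      (fun _ => hfS _) (fun k => by simpa [add_assoc] using hf (c + k)) (by simpa using hE))
  have hlen : 2 ≤ Nat.find h + 1 := by
    have h1 : ((1 : ℕ) : ZMod (Nat.find h + 1)) ≠ 0 := fun h1 => by
      rw [Nat.cast_one] at h1
      exact hloop (f 0) (by simpa [h1] using hf 0)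
    rw [Ne, ZMod.natCast_eq_zero_iff, Nat.dvd_one] at h1
    omega
  have hinj : Function.Injective f := fun a b hab => by
    by_contra hne
    have hd : (b - a).val ≠ 0 := (ZMod.val_ne_zero _).2 (sub_ne_zero.2 (Ne.symm hne))
    have := hshort a ((b - a).val - 1) (by
      have := hf (a + ((b - a).val - 1 : ℕ))
      rwa [add_assoc, ← Nat.cast_succ, Nat.succ_eq_add_one, Nat.sub_add_cancel
        (Nat.pos_of_ne_zero hd), ZMod.natCast_zmod_val, add_sub_cancel, ← hab] at this)
    have := ZMod.val_lt (b - a)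
    omega
  refine ⟨Set.range f, Set.range_subset_iff.2 hfS, _, hlen, f, hinj, rfl,
    fun a b => ⟨fun hab => ?_, fun hab => hab ▸ hf a⟩⟩
  have hle := hshort b (a - b).val (by rwa [ZMod.natCast_zmod_val, add_sub_cancel])
  have hval : (a - b).val = Nat.find h := le_antisymm (Nat.lt_succ_iff.1 (ZMod.val_lt _)) hle
  have : ((a - b).val + 1 : ℕ) = (0 : ZMod (Nat.find h + 1)) := by
    rw [hval, ZMod.natCast_self]
  rw [Nat.cast_add, ZMod.natCast_zmod_val, Nat.cast_one] at this
  linear_combination -this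

lemma IsInducedCycle.eq_univ_of_stronglyConnectedOn (hC : IsInducedCycle E Set.univ) {T : Set V}
    (hT : StronglyConnectedOn E T) (hnt : T.Nontrivial) : T = Set.univ := by
  obtain ⟨n, hn, f, -, hfrange, hf⟩ := hC
  have : NeZero n := ⟨by omega⟩
  have hsurj := Set.range_eq_univ.1 hfrange
  have hsucc : ∀ a, f a ∈ T → f (a + 1) ∈ T := fun a ha => by
    obtain ⟨j, hjT, hj⟩ := hT.exists_adj hnt ha
    obtain ⟨b, rfl⟩ := hsurj j
    rwa [← (hf a b).1 hj]
  have hadd : ∀ a (k : ℕ), f a ∈ T → f (a + k) ∈ T := fun a k ha => by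
    induction k with
    | zero => simpa using ha
    | succ k ih => simpa [add_assoc] using hsucc _ ih
  obtain ⟨t, ht⟩ := hnt.nonempty
  obtain ⟨a, rfl⟩ := hsurj t
  refine Set.eq_univ_of_forall fun v => ?_
  obtain ⟨b, rfl⟩ := hsurj v
  simpa [ZMod.natCast_zmod_val] using hadd a (b - a).val ht

lemma IsInducedCycle.nonempty (hC : IsInducedCycle E C) : C.Nonempty := by
  obtain ⟨n, -, f, -, rfl, -⟩ := hC
  exact ⟨f 0, 0, rfl⟩

lemma IsInducedCycle.hasEigOn_one [Fintype V] (hC : IsInducedCycle E C) : HasEigOn E C 1 := by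
  obtain ⟨n, -, f, -, rfl, hf⟩ := hC
  refine ⟨(Set.range f).indicator 1, Set.indicator_nonneg (fun _ _ => zero_le_one),
    fun i => ?_, ?_⟩
  · by_cases hi : i ∈ Set.range f <;> simp [hi]
  · rintro _ ⟨a, rfl⟩
    change ∑ j, adjMat E (f a) j * _ = _
    rw [Finset.sum_eq_single (f (a + 1))]
    · simp [adjMat_apply, (hf a (a + 1)).2 rfl]
    · intro j _ hj
      by_cases hjC : j ∈ Set.range f
      · obtain ⟨b, rfl⟩ := hjC
        have : ¬ E (f a) (f b) := fun hE => hj (by rw [(hf a b).1 hE])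
        simp [adjMat_apply, this]
      · simp [Set.indicator_of_notMem hjC]
    · simp

lemma hasEigOn_singleton_iff [Fintype V] (hloop : ∀ v, ¬ E v v) {v : V} {r : ℝ} :
    HasEigOn E {v} r ↔ r = 0 := by
  constructor
  · rintro ⟨x, hx⟩
    have hAx : (adjMat E *ᵥ x) v = 0 := Finset.sum_eq_zero fun j _ => by
      by_cases hj : j = v
      · simp [hj, adjMat_apply, hloop]
      · simp [hx.apply_eq_zero (Set.notMem_singleton_iff.2 hj)]
    have := hx.2.2 v rfl
    rw [hAx] at this
    exact (mul_eq_zero.1 this.symm).resolve_right ((hx.2.1 v).2 rfl).ne'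
  · rintro rfl
    refine ⟨Pi.single v 1, Pi.single_nonneg.2 zero_le_one, fun i => ?_, ?_⟩
    · by_cases hi : i = v <;> simp [hi]
    · rintro i rfl
      simp [adjMat_apply, hloop]

lemma isCycleDigraph_induceRel_iff : IsCycleDigraph (induceRel E C) ↔ IsInducedCycle E C := by
  constructor
  · rintro ⟨n, hn, e, he⟩
    refine ⟨n, hn, fun i => e.symm i, Subtype.val_injective.comp e.symm.injective, ?_,
      fun i j => by simpa [induceRel, cycleRel] using he (e.symm i) (e.symm j)⟩
    ext v
    exact ⟨by rintro ⟨i, rfl⟩; exact (e.symm i).2, fun hv => ⟨e ⟨v, hv⟩, by simp⟩⟩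
  · rintro ⟨n, hn, f, hf, rfl, hE⟩
    refine ⟨n, hn, (Equiv.ofInjective f hf).symm, fun a b => ?_⟩
    rw [induceRel, ← Equiv.apply_ofInjective_symm hf a, ← Equiv.apply_ofInjective_symm hf b, hE]
    rfl

lemma isCycleDigraph_iff_isInducedCycle_univ : IsCycleDigraph E ↔ IsInducedCycle E Set.univ := by
  rw [← isCycleDigraph_induceRel_iff]
  constructor
  · rintro ⟨n, hn, e, he⟩
    exact ⟨n, hn, (Equiv.Set.univ V).trans e, fun a b => he a b⟩
  · rintro ⟨n, hn, e, he⟩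
    exact ⟨n, hn, (Equiv.Set.univ V).symm.trans e,
      fun a b => he ((Equiv.Set.univ V).symm a) ((Equiv.Set.univ V).symm b)⟩

end Cycles

section Count

variable {V : Type*} [Fintype V] {E : V → V → Prop}

lemma HasEigOn.mem_compSpec {S : Set V} {r : ℝ} (h : HasEigOn E S r) (hS : S.Nonempty) :
    r ∈ compSpec (adjMat E) :=
  mem_compSpec_iff_exists_hasEigOn.2 ⟨S, hS, h⟩

lemma finite_compSpec : (compSpec (adjMat E)).Finite := by
  refine (Set.finite_iUnion fun C : Set V => (?_ : {r | C.Nonempty ∧ HasEigOn E C r}.Finite)).subset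
    fun r hr => ?_
  · exact Set.Subsingleton.finite fun r hr s hs => hr.2.eq hr.1 hs.2
  · obtain ⟨C, hC, h⟩ := mem_compSpec_iff_exists_hasEigOn.1 hr
    exact Set.mem_iUnion.2 ⟨C, hC, h⟩

lemma ncard_compSpec_le_two (hloop : ∀ v, ¬ E v v)
    (h : ∀ C : Set V, C.Nontrivial → StronglyConnectedOn E C → ∀ r, HasEigOn E C r → r = 1) :
    (compSpec (adjMat E)).ncard ≤ 2 := by
  have hsub : compSpec (adjMat E) ⊆ {0, 1} := fun r hr => by
    obtain ⟨C, ⟨v, hv⟩, hC, hr⟩ := mem_compSpec_iff.1 hr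
    rcases C.subsingleton_or_nontrivial with hsub | hnt
    · rw [hsub.eq_singleton_of_mem hv] at hr
      exact .inl ((hasEigOn_singleton_iff hloop).1 hr)
    · exact .inr (h C hnt hC r hr)
  exact (Set.ncard_le_ncard hsub (Set.toFinite _)).trans (Set.ncard_pair zero_ne_one).le

lemma four_le_ncard_compSpec {a b c d : ℝ} (hab : a < b) (hbc : b < c) (hcd : c < d)
    (h : {a, b, c, d} ⊆ compSpec (adjMat E)) : 4 ≤ (compSpec (adjMat E)).ncard := by
  refine le_of_eq_of_le ?_ (Set.ncard_le_ncard h finite_compSpec)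
  rw [Set.ncard_insert_of_notMem, Set.ncard_insert_of_notMem, Set.ncard_pair hcd.ne]
  · simp only [Set.mem_insert_iff, Set.mem_singleton_iff, not_or]
    exact ⟨hbc.ne, (hbc.trans hcd).ne⟩
  · simp only [Set.mem_insert_iff, Set.mem_singleton_iff, not_or]
    exact ⟨hab.ne, (hab.trans hbc).ne, (hab.trans (hbc.trans hcd)).ne⟩

/-- Otherwise an induced cycle `C ⊊ S` gives `0 < 1 < ρ(S) < ρ(V)` in the spectrum. -/
lemma isInducedCycle_of_ncard_compSpec_eq_three (hloop : ∀ v, ¬ E v v)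
    (hsc : StronglyConnectedOn E Set.univ) (h3 : (compSpec (adjMat E)).ncard = 3) {S : Set V}
    (hSU : S ≠ Set.univ) (hnt : S.Nontrivial) (hS : StronglyConnectedOn E S) :
    IsInducedCycle E S := by
  obtain ⟨C, hCS, hC⟩ := exists_isInducedCycle_of_hasClosedWalk hloop (hS.exists_hasClosedWalk hnt)
  rcases hCS.eq_or_ssubset with rfl | hCS
  · exact hC
  obtain ⟨ρS, hρS⟩ := hS.exists_hasEigOn hnt.nonempty
  obtain ⟨v, hv⟩ := hnt.nonempty
  obtain ⟨ρ, hρ⟩ := hsc.exists_hasEigOn ⟨v, Set.mem_univ v⟩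
  have h1 : 1 < ρS := hC.hasEigOn_one.lt_of_ssubset hC.nonempty hCS hS hρS
  have h2 : ρS < ρ := hρS.lt_of_ssubset hnt.nonempty (Set.ssubset_univ_iff.2 hSU) hsc hρ
  have := four_le_ncard_compSpec zero_lt_one h1 h2 (by
    simp only [Set.insert_subset_iff, Set.singleton_subset_iff]
    exact ⟨((hasEigOn_singleton_iff hloop).2 rfl).mem_compSpec (Set.singleton_nonempty v),
      hC.hasEigOn_one.mem_compSpec hC.nonempty, hρS.mem_compSpec ⟨v, hv⟩,
      hρ.mem_compSpec ⟨v, Set.mem_univ v⟩⟩)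
  omega

lemma ncard_compSpec_eq_three (hloop : ∀ v, ¬ E v v) (hsc : StronglyConnectedOn E Set.univ)
    (hall : ∀ S : Set V, S ≠ Set.univ → S.Nonempty → StronglyConnectedOn E S →
      (∃ v, S = {v}) ∨ IsInducedCycle E S)
    (hnc : ¬ IsInducedCycle E Set.univ) (hcard : 1 < Fintype.card V) :
    (compSpec (adjMat E)).ncard = 3 := by
  have hnt : (Set.univ : Set V).Nontrivial :=
    Set.nontrivial_univ_iff.2 (Fintype.one_lt_card_iff_nontrivial.1 hcard)
  obtain ⟨v, -⟩ := hnt.nonempty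
  obtain ⟨ρ, hρ⟩ := hsc.exists_hasEigOn ⟨v, Set.mem_univ v⟩
  obtain ⟨C, -, hC⟩ := exists_isInducedCycle_of_hasClosedWalk hloop (hsc.exists_hasClosedWalk hnt)
  have h1 : 1 < ρ := hC.hasEigOn_one.lt_of_ssubset hC.nonempty
    (Set.ssubset_univ_iff.2 (by rintro rfl; exact hnc hC)) hsc hρ
  have hspec : compSpec (adjMat E) = {0, 1, ρ} := by
    refine subset_antisymm (fun r hr => ?_) ?_
    · obtain ⟨T, hT, hTsc, hr⟩ := mem_compSpec_iff.1 hr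
      by_cases hTU : T = Set.univ
      · subst hTU
        exact .inr (.inr (hr.eq hT hρ))
      rcases hall T hTU hT hTsc with ⟨v, rfl⟩ | hcyc
      · exact .inl ((hasEigOn_singleton_iff hloop).1 hr)
      · exact .inr (.inl (hr.eq hT hcyc.hasEigOn_one))
    · simp only [Set.insert_subset_iff, Set.singleton_subset_iff]
      exact ⟨((hasEigOn_singleton_iff hloop).2 rfl).mem_compSpec (Set.singleton_nonempty v),
        hC.hasEigOn_one.mem_compSpec hC.nonempty, hρ.mem_compSpec ⟨v, Set.mem_univ v⟩⟩
  rw [hspec, Set.ncard_eq_three]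
  exact ⟨0, 1, ρ, zero_ne_one, (zero_lt_one.trans h1).ne, h1.ne, rfl⟩

end Count

theorem stmt11_general {V : Type*} [Fintype V] (E : V → V → Prop)
    (hloop : ∀ v, ¬ E v v) (hsc : StronglyConnected E) :
    (compSpec (adjMat E)).ncard = 3 ↔
      ((∀ S : Set V, S ≠ Set.univ → S.Nonempty → StronglyConnected (induceRel E S) →
          ((∃ v, S = {v}) ∨ IsCycleDigraph (induceRel E S))) ∧
        ¬ IsCycleDigraph E ∧ 1 < Fintype.card V) := by
  have hscU := hsc.stronglyConnectedOn_univ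
  rw [isCycleDigraph_iff_isInducedCycle_univ (E := E)]
  simp only [isCycleDigraph_induceRel_iff, ← stronglyConnectedOn_iff]
  refine ⟨fun h3 => ⟨fun S hSU hS hSsc => ?_, fun hcyc => ?_, ?_⟩,
    fun ⟨hall, hnc, hcard⟩ => ncard_compSpec_eq_three hloop hscU hall hnc hcard⟩
  · rcases S.subsingleton_or_nontrivial with hsub | hnt
    · exact .inl ⟨_, hsub.eq_singleton_of_mem hS.some_mem⟩
    · exact .inr (isInducedCycle_of_ncard_compSpec_eq_three hloop hscU h3 hSU hnt hSsc)
  · have := ncard_compSpec_le_two hloop fun C hnt hC r hr =>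
      (hcyc.eq_univ_of_stronglyConnectedOn hC hnt ▸ hr).eq hcyc.nonempty hcyc.hasEigOn_one
    omega
  · by_contra hcard
    have := ncard_compSpec_le_two hloop fun C hnt => absurd hnt (Set.not_nontrivial_iff.2
      fun a _ b _ => Fintype.card_le_one_iff.1 (not_lt.1 hcard) a b)
    omega

/-- a strongly connected digraph has exactly three complementarity
eigenvalues iff all its proper induced strongly connected subdigraphs are single
vertices or directed cycles, and it is itself neither a cycle nor a single vertex. -/
theorem stmt11 {V : Type*} [Fintype V] [Nonempty V] (E : V → V → Prop)
    (hloop : ∀ v, ¬ E v v) (hsc : StronglyConnected E) :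
    (compSpec (adjMat E)).ncard = 3 ↔
      ((∀ S : Set V, S ≠ Set.univ → S.Nonempty → StronglyConnected (induceRel E S) →
          ((∃ v, S = {v}) ∨ IsCycleDigraph (induceRel E S))) ∧
        ¬ IsCycleDigraph E ∧ 1 < Fintype.card V) :=
  stmt11_general E hloop hsc
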